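/- arXiv:1209.0676 — 2 statements merged into one kernel-verified Lean document; each statement's English description precedes it below -/
import Mathlib

section
/- For 1 ≤ k ≤ T−1, no two distinct nodes belonging to the same level-k set S_{ik} lie in the same Tx-(k+1) group under the HINT-T assignment. -/
/-- For `1 ≤ k ≤ T−1`, no two distinct nodes in the same level-k set
`S_{ik} = {(i−1)M^k+1, …, i·M^k}` lie in the same Tx-(k+1) group
`{(i'−1)M^{k+1} + j + t·M^k : 0 ≤ t ≤ M−1}`. -/
theorem hintT_interleaving (M T k i i' j a b : ℕ) (hM : 2 ≤ M)
    (hk1 : 1 ≤ k) (hkT : k ≤ T - 1)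
    (hi : 1 ≤ i ∧ i ≤ M ^ (T - k))
    (hi' : 1 ≤ i' ∧ i' ≤ M ^ (T - k - 1)) (hj : 1 ≤ j ∧ j ≤ M ^ k)
    (hab : a ≠ b)
    (haS : (i - 1) * M ^ k + 1 ≤ a ∧ a ≤ i * M ^ k)
    (hbS : (i - 1) * M ^ k + 1 ≤ b ∧ b ≤ i * M ^ k)
    (haG : ∃ t < M, a = (i' - 1) * M ^ (k + 1) + j + t * M ^ k)
    (hbG : ∃ t < M, b = (i' - 1) * M ^ (k + 1) + j + t * M ^ k) :
    False := by
  obtain ⟨t, ht, rfl⟩ := haG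
  obtain ⟨s, hs, rfl⟩ := hbG
  have hts : t ≠ s := by rintro rfl; exact hab rfl
  have hmul : i * M ^ k = (i - 1) * M ^ k + M ^ k := by
    have h1 : i - 1 + 1 = i := Nat.succ_pred_eq_of_pos hi.1
    calc i * M ^ k = (i - 1 + 1) * M ^ k := by rw [h1]
    _ = (i - 1) * M ^ k + M ^ k := by ring
  rcases Nat.lt_or_ge t s with h | h
  · have h2 : t * M ^ k + M ^ k ≤ s * M ^ k := by
      calc t * M ^ k + M ^ k = (t + 1) * M ^ k := by ring
      _ ≤ s * M ^ k := Nat.mul_le_mul_right _ h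
    omega
  · have h' : s < t := lt_of_le_of_ne h (Ne.symm hts)
    have h2 : s * M ^ k + M ^ k ≤ t * M ^ k := by
      calc s * M ^ k + M ^ k = (s + 1) * M ^ k := by ring
      _ ≤ t * M ^ k := Nat.mul_le_mul_right _ h'
    omega
end

section
/- In the HINT-T routing step: if k(s,d) = k > 1 and d is not in the Tx-k group of s, then there exists a neighbor n of s in its Tx-k group with k(n,d) ≤ k − 1; hence the minimizing relay r* satisfies k(r*,d) < k(s,d). -/
/-!
By minimality of `k = k(s,d)`, the nodes `s` and `d` lie in a common level-`k` set `S_{ik}` but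
in different level-`(k-1)` subsets of it. The Tx-`k` group of `s` has one member in each of these
`M` subsets; the member `n` in the subset containing `d` is therefore not `s`, and `k(n,d) ≤ k-1`.
-/

/-- `kval M T a b` is the smallest `k ≥ 1` such that some level-k set
`S_{ik} = {(i−1)M^k+1, …, iM^k}` contains both `a` and `b`. -/
noncomputable def kval (M T a b : ℕ) : ℕ :=
  sInf {k | 1 ≤ k ∧ ∃ i, 1 ≤ i ∧ i ≤ M ^ (T - k) ∧
    ((i - 1) * M ^ k + 1 ≤ a ∧ a ≤ i * M ^ k) ∧
    ((i - 1) * M ^ k + 1 ≤ b ∧ b ≤ i * M ^ k)}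

/-- For `m = M ^ k`, `InBlock m i a` is membership of `a` in the level set `S_{ik}`. -/
def InBlock (m i a : ℕ) : Prop :=
  (i - 1) * m + 1 ≤ a ∧ a ≤ i * m

namespace InBlock

variable {m M i i' c a : ℕ}

theorem one_le_index (h : InBlock m i a) : 1 ≤ i := by
  rcases i with _ | i
  · simp [InBlock] at h
    omega
  · omega

theorem iff (hm : 0 < m) : InBlock m i a ↔ 0 < a ∧ i = (a - 1) / m + 1 := by
  rcases i with _ | i
  · simp [InBlock]
    omega
  · simp only [InBlock, Nat.add_sub_cancel, Nat.add_right_cancel_iff, eq_comm (a := i),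
      Nat.div_eq_iff hm, Nat.add_mul, one_mul]
    omega

theorem unique (hm : 0 < m) (h : InBlock m i a) (h' : InBlock m i' a) : i = i' :=
  ((iff hm).1 h).2.trans ((iff hm).1 h').2.symm

theorem offset {j : ℕ} (hj : 1 ≤ j) (hjm : j ≤ m) : InBlock m (c + 1) (c * m + j) := by
  simp only [InBlock, Nat.add_sub_cancel, Nat.add_mul, one_mul]
  omega

theorem of_refine {t : ℕ} (hm : 0 < m) (hi : 1 ≤ i) (ht : t < M)
    (h : InBlock m ((i - 1) * M + t + 1) a) : InBlock (m * M) i a := by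
  obtain ⟨ha, hidx⟩ := (iff hm).1 h
  have hM : 0 < M := by omega
  refine (iff (Nat.mul_pos hm hM)).2 ⟨ha, ?_⟩
  rw [← Nat.div_div_eq_div_mul, ← Nat.add_right_cancel hidx, mul_comm, Nat.mul_add_div hM,
    Nat.div_eq_of_lt ht]
  omega

theorem exists_refine (hm : 0 < m) (hM : 0 < M) (h : InBlock (m * M) i a) :
    ∃ t < M, InBlock m ((i - 1) * M + t + 1) a := by
  obtain ⟨ha, rfl⟩ := (iff (Nat.mul_pos hm hM)).1 h
  refine ⟨(a - 1) / m % M, Nat.mod_lt _ hM, (iff hm).2 ⟨ha, ?_⟩⟩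
  rw [Nat.add_sub_cancel, ← Nat.div_div_eq_div_mul, mul_comm, Nat.div_add_mod]

end InBlock

theorem inBlock_txGroup {M k i j : ℕ} (t : ℕ) (hk : k ≠ 0)
    (hj : 1 ≤ j ∧ j ≤ M ^ (k - 1)) :
    InBlock (M ^ (k - 1)) ((i - 1) * M + t + 1) ((i - 1) * M ^ k + j + t * M ^ (k - 1)) := by
  rw [← pow_sub_one_mul hk, show (i - 1) * (M ^ (k - 1) * M) + j + t * M ^ (k - 1)
    = ((i - 1) * M + t) * M ^ (k - 1) + j by ring]
  exact InBlock.offset hj.1 hj.2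

theorem kval_le_of_inBlock {M T k i a b : ℕ} (hk : 1 ≤ k) (hiT : i ≤ M ^ (T - k))
    (ha : InBlock (M ^ k) i a) (hb : InBlock (M ^ k) i b) : kval M T a b ≤ k :=
  Nat.sInf_le ⟨hk, i, ha.one_le_index, hiT, ha, hb⟩

theorem exists_inBlock_of_kval_pos {M T a b : ℕ} (h : 0 < kval M T a b) :
    ∃ i ≤ M ^ (T - kval M T a b),
      InBlock (M ^ kval M T a b) i a ∧ InBlock (M ^ kval M T a b) i b := by
  obtain ⟨-, i, -, hiT, ha, hb⟩ := Nat.sInf_mem (Nat.nonempty_of_pos_sInf h)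
  exact ⟨i, hiT, ha, hb⟩

theorem kval_le_pred_of_inBlock {M T k i t a b : ℕ} (hk : 1 < k) (hkT : k ≤ T)
    (hi : 1 ≤ i ∧ i ≤ M ^ (T - k)) (ht : t < M)
    (ha : InBlock (M ^ (k - 1)) ((i - 1) * M + t + 1) a)
    (hb : InBlock (M ^ (k - 1)) ((i - 1) * M + t + 1) b) : kval M T a b ≤ k - 1 := by
  refine kval_le_of_inBlock (by omega) ?_ ha hb
  obtain ⟨i, rfl⟩ : ∃ i', i = i' + 1 := ⟨i - 1, by omega⟩
  have hiM := Nat.mul_le_mul_right M hi.2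
  rw [show T - (k - 1) = T - k + 1 by omega, pow_succ, Nat.add_sub_cancel]
  rw [Nat.add_mul, one_mul] at hiM
  omega

theorem hintT_routing_step_general (M T s d k i j : ℕ)
    (hk : kval M T s d = k) (hk1 : 1 < k) (hkT : k ≤ T)
    (hi : 1 ≤ i ∧ i ≤ M ^ (T - k)) (hj : 1 ≤ j ∧ j ≤ M ^ (k - 1))
    (hsG : ∃ t < M, s = (i - 1) * M ^ k + j + t * M ^ (k - 1)) :
    ∃ n, n ≠ s ∧ (∃ t < M, n = (i - 1) * M ^ k + j + t * M ^ (k - 1)) ∧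
      kval M T n d ≤ k - 1 := by
  obtain ⟨t, ht, hs⟩ := hsG
  have hM : 0 < M := by omega
  have hm : 0 < M ^ (k - 1) := by positivity
  have hMk : M ^ k = M ^ (k - 1) * M := (pow_sub_one_mul (by omega) M).symm
  have hsFine : InBlock (M ^ (k - 1)) ((i - 1) * M + t + 1) s :=
    hs ▸ inBlock_txGroup t (by omega) hj
  obtain ⟨i₀, -, hs₀, hd₀⟩ := exists_inBlock_of_kval_pos (by omega : 0 < kval M T s d)
  rw [hk] at hs₀ hd₀
  obtain rfl := hs₀.unique (by positivity) (hMk ▸ hsFine.of_refine hm hi.1 ht)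
  obtain ⟨t', ht', hdFine⟩ := (hMk ▸ hd₀).exists_refine hm hM
  have htt' : t' ≠ t := by
    rintro rfl
    have := kval_le_pred_of_inBlock hk1 hkT hi ht hsFine hdFine
    omega
  refine ⟨_, ?_, ⟨t', ht', rfl⟩,
    kval_le_pred_of_inBlock hk1 hkT hi ht' (inBlock_txGroup t' (by omega) hj) hdFine⟩
  simpa [hs, hM.ne'] using htt'

/-- HINT-T routing step: if `k(s,d) = k > 1` and `d` is not in the Tx-k group
of `s` (the group `{(i−1)M^k + j + t·M^{k−1} : 0 ≤ t ≤ M−1}` containing `s`),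
then some neighbor `n` of `s` in that group has `k(n,d) ≤ k − 1`; hence the
minimizing relay `r*` satisfies `k(r*,d) < k(s,d)`. -/
theorem hintT_routing_step (M T s d k i j : ℕ) (hM : 2 ≤ M)
    (hd : d ∈ Finset.Icc 1 (M ^ T))
    (hk : kval M T s d = k) (hk1 : 1 < k) (hkT : k ≤ T)
    (hi : 1 ≤ i ∧ i ≤ M ^ (T - k)) (hj : 1 ≤ j ∧ j ≤ M ^ (k - 1))
    (hsG : ∃ t < M, s = (i - 1) * M ^ k + j + t * M ^ (k - 1))
    (hdG : ¬ ∃ t < M, d = (i - 1) * M ^ k + j + t * M ^ (k - 1)) :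
    ∃ n, n ≠ s ∧ (∃ t < M, n = (i - 1) * M ^ k + j + t * M ^ (k - 1)) ∧
      kval M T n d ≤ k - 1 :=
  hintT_routing_step_general M T s d k i j hk hk1 hkT hi hj hsG
end
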